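/- Let p be an odd prime. The lattice Λ₀ = Λ(0; 1, −1, 0; −1, 1, 0; 0) of Zorn vector matrices over ℚ_p is an order (it contains 1 and is closed under Zorn multiplication), and it is maximal among orders of this diagonal form: for any integers b₁, …, b₈, if Λ(b₁; b₂, b₃, b₄; b₅, b₆, b₇; b₈) is an order and contains Λ₀, then Λ(b₁; b₂, b₃, b₄; b₅, b₆, b₇; b₈) = Λ₀. -/

import Mathlib

open Matrix

/-- A Zorn vector matrix (split octonion) over `k`. -/
abbrev Zorn (k : Type*) := k × (Fin 3 → k) × (Fin 3 → k) × k

/-- The Zorn product of two Zorn vector matrices. -/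
def zmul {k : Type*} [Field k] (x y : Zorn k) : Zorn k :=
  (x.1 * y.1 + x.2.1 ⬝ᵥ y.2.2.1,
   x.1 • y.2.1 + y.2.2.2 • x.2.1 - x.2.2.1 ⨯₃ y.2.2.1,
   y.1 • x.2.2.1 + x.2.2.2 • y.2.2.1 + x.2.1 ⨯₃ y.2.1,
   x.2.2.2 * y.2.2.2 + x.2.2.1 ⬝ᵥ y.2.1)

/-- The identity Zorn vector matrix. -/
def zone {k : Type*} [Field k] : Zorn k := (1, 0, 0, 1)

variable (p : ℕ) [Fact p.Prime]

/-- `a` lies in `p^n ℤ_p ⊆ ℚ_p`. -/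
def inLat (n : ℤ) (a : ℚ_[p]) : Prop := ∃ z : ℤ_[p], a = (p : ℚ_[p]) ^ n * (z : ℚ_[p])

/-- The lattice `Λ(a₁; a₂, a₃, a₄; a₅, a₆, a₇; a₈)` of Zorn vector matrices over `ℚ_p`. -/
def Lam (a₁ a₂ a₃ a₄ a₅ a₆ a₇ a₈ : ℤ) : Set (Zorn ℚ_[p]) :=
  {x | inLat p a₁ x.1 ∧ inLat p a₂ (x.2.1 0) ∧ inLat p a₃ (x.2.1 1) ∧
       inLat p a₄ (x.2.1 2) ∧ inLat p a₅ (x.2.2.1 0) ∧ inLat p a₆ (x.2.2.1 1) ∧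
       inLat p a₇ (x.2.2.1 2) ∧ inLat p a₈ x.2.2.2}

/-- A set of Zorn vector matrices is an order if it contains `1` and is
closed under the Zorn product. -/
def IsOrder (S : Set (Zorn ℚ_[p])) : Prop :=
  zone ∈ S ∧ ∀ x ∈ S, ∀ y ∈ S, zmul x y ∈ S

/-
Membership in `p^n ℤ_p` is the norm bound `‖a‖ ≤ p^(-n)`, so by the ultrametric inequality
`Λ(0; v₁, v₂, v₃; w₁, w₂, w₃; 0)` is closed under the Zorn product as soon as
`vᵢ + wᵢ ≥ 0`, `vᵢ ≤ wⱼ + wₖ` and `wᵢ ≤ vⱼ + vₖ` for `{i, j, k} = {1, 2, 3}`; for `Λ₀` all of these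
hold with equality. Conversely, if `Λ(b) ⊇ Λ₀` then `b ≤ (0; 1, -1, 0; -1, 1, 0; 0)` coordinatewise,
while closure of `Λ(b)` under squaring `p^b₁` and `p^b₈` and under the products `(p^b_{1+i} eᵢ)(p^b_{4+i} eᵢ)`
forces `b₁, b₈ ≥ 0` and `b₁ ≤ b_{1+i} + b_{4+i}`, which leaves no room.
-/

variable {p}

lemma inLat_iff_norm_le {n : ℤ} {a : ℚ_[p]} : inLat p n a ↔ ‖a‖ ≤ (p : ℝ) ^ (-n) := by
  have hp : (0 : ℝ) < p := Nat.cast_pos.2 (Fact.out : p.Prime).pos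
  constructor
  · rintro ⟨z, rfl⟩
    rw [norm_mul, Padic.norm_p_zpow]
    exact mul_le_of_le_one_right (by positivity) z.norm_le_one
  · intro h
    have hp0 : (p : ℚ_[p]) ≠ 0 := NeZero.ne _
    refine ⟨⟨(p : ℚ_[p]) ^ (-n) * a, ?_⟩, ?_⟩
    · calc ‖(p : ℚ_[p]) ^ (-n) * a‖ = (p : ℝ) ^ n * ‖a‖ := by
            rw [norm_mul, Padic.norm_p_zpow, neg_neg]
        _ ≤ (p : ℝ) ^ n * (p : ℝ) ^ (-n) := by gcongr
        _ = 1 := by rw [← zpow_add₀ hp.ne', add_neg_cancel, zpow_zero]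
    · change a = _ * (_ * a)
      rw [← mul_assoc, ← zpow_add₀ hp0, add_neg_cancel, zpow_zero, one_mul]

@[simp]
lemma inLat_zpow_iff {n m : ℤ} : inLat p n ((p : ℚ_[p]) ^ m) ↔ n ≤ m := by
  rw [inLat_iff_norm_le, Padic.norm_p_zpow,
    zpow_le_zpow_iff_right₀ (by exact_mod_cast (Fact.out : p.Prime).one_lt), neg_le_neg_iff]

@[simp]
lemma inLat_one_iff {n : ℤ} : inLat p n 1 ↔ n ≤ 0 := by
  simpa using inLat_zpow_iff (p := p) (n := n) (m := 0)

@[simp]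
lemma inLat_zero {n : ℤ} : inLat p n 0 := ⟨0, by simp⟩

lemma inLat.add {n : ℤ} {a b : ℚ_[p]} (ha : inLat p n a) (hb : inLat p n b) :
    inLat p n (a + b) := by
  rw [inLat_iff_norm_le] at *
  exact (IsUltrametricDist.norm_add_le_max a b).trans (max_le ha hb)

lemma inLat.sub {n : ℤ} {a b : ℚ_[p]} (ha : inLat p n a) (hb : inLat p n b) :
    inLat p n (a - b) := by
  rw [sub_eq_add_neg]
  exact ha.add (by rwa [inLat_iff_norm_le, norm_neg, ← inLat_iff_norm_le])

lemma inLat.mul {n m k : ℤ} {a b : ℚ_[p]} (ha : inLat p n a) (hb : inLat p m b)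
    (hk : k ≤ n + m) : inLat p k (a * b) := by
  have hp : (1 : ℝ) ≤ p := by exact_mod_cast (Fact.out : p.Prime).one_lt.le
  rw [inLat_iff_norm_le] at *
  calc ‖a * b‖ ≤ (p : ℝ) ^ (-n) * (p : ℝ) ^ (-m) := by
        rw [norm_mul]; exact mul_le_mul ha hb (norm_nonneg _) (by positivity)
    _ = (p : ℝ) ^ (-(n + m)) := by rw [← zpow_add₀ (by positivity), neg_add]
    _ ≤ (p : ℝ) ^ (-k) := zpow_le_zpow_right₀ hp (by omega)

lemma le_add_of_inLat_zpow_mul {n a b : ℤ} (h : inLat p n ((p : ℚ_[p]) ^ a * (p : ℚ_[p]) ^ b)) :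
    n ≤ a + b := by
  rwa [← zpow_add₀ (NeZero.ne _), inLat_zpow_iff] at h

lemma le_of_Lam_subset_Lam {a₁ a₂ a₃ a₄ a₅ a₆ a₇ a₈ b₁ b₂ b₃ b₄ b₅ b₆ b₇ b₈ : ℤ}
    (h : Lam p a₁ a₂ a₃ a₄ a₅ a₆ a₇ a₈ ⊆ Lam p b₁ b₂ b₃ b₄ b₅ b₆ b₇ b₈) :
    b₁ ≤ a₁ ∧ b₂ ≤ a₂ ∧ b₃ ≤ a₃ ∧ b₄ ≤ a₄ ∧ b₅ ≤ a₅ ∧ b₆ ≤ a₆ ∧ b₇ ≤ a₇ ∧ b₈ ≤ a₈ := by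
  set q : ℤ → ℚ_[p] := fun n ↦ (p : ℚ_[p]) ^ n
  have hx : ((q a₁, ![q a₂, q a₃, q a₄], ![q a₅, q a₆, q a₇], q a₈) : Zorn ℚ_[p]) ∈
      Lam p a₁ a₂ a₃ a₄ a₅ a₆ a₇ a₈ := by
    simp [Lam, q]
  simpa [Lam, q] using h hx

variable {b₁ b₂ b₃ b₄ b₅ b₆ b₇ b₈ : ℤ}

lemma IsOrder.zero_le_of_Lam (h : IsOrder p (Lam p b₁ b₂ b₃ b₄ b₅ b₆ b₇ b₈)) :
    0 ≤ b₁ ∧ 0 ≤ b₈ := by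
  have ha : (((p : ℚ_[p]) ^ b₁, 0, 0, 0) : Zorn ℚ_[p]) ∈ Lam p b₁ b₂ b₃ b₄ b₅ b₆ b₇ b₈ := by
    simp [Lam]
  have hd : ((0, 0, 0, (p : ℚ_[p]) ^ b₈) : Zorn ℚ_[p]) ∈ Lam p b₁ b₂ b₃ b₄ b₅ b₆ b₇ b₈ := by
    simp [Lam]
  have h₁ := (h.2 _ ha _ ha).1
  have h₈ := (h.2 _ hd _ hd).2.2.2.2.2.2.2
  simp only [zmul, dotProduct_zero, add_zero] at h₁ h₈
  constructor
  · linarith [le_add_of_inLat_zpow_mul h₁]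
  · linarith [le_add_of_inLat_zpow_mul h₈]

lemma IsOrder.le_add_of_Lam (h : IsOrder p (Lam p b₁ b₂ b₃ b₄ b₅ b₆ b₇ b₈)) :
    b₁ ≤ b₂ + b₅ ∧ b₁ ≤ b₃ + b₆ ∧ b₁ ≤ b₄ + b₇ := by
  suffices key : ∀ i, b₁ ≤ ![b₂, b₃, b₄] i + ![b₅, b₆, b₇] i from ⟨key 0, key 1, key 2⟩
  intro i
  have hv : ((0, Pi.single i ((p : ℚ_[p]) ^ ![b₂, b₃, b₄] i), 0, 0) : Zorn ℚ_[p]) ∈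
      Lam p b₁ b₂ b₃ b₄ b₅ b₆ b₇ b₈ := by
    fin_cases i <;> simp [Lam]
  have hw : ((0, 0, Pi.single i ((p : ℚ_[p]) ^ ![b₅, b₆, b₇] i), 0) : Zorn ℚ_[p]) ∈
      Lam p b₁ b₂ b₃ b₄ b₅ b₆ b₇ b₈ := by
    fin_cases i <;> simp [Lam]
  have h₁ := (h.2 _ hv _ hw).1
  simp only [zmul, mul_zero, zero_add, single_dotProduct, Pi.single_eq_same] at h₁
  exact le_add_of_inLat_zpow_mul h₁

lemma isOrder_Lam_of_le {v₁ v₂ v₃ w₁ w₂ w₃ : ℤ}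
    (h₁ : 0 ≤ v₁ + w₁) (h₂ : 0 ≤ v₂ + w₂) (h₃ : 0 ≤ v₃ + w₃)
    (hv₁ : v₁ ≤ w₂ + w₃) (hv₂ : v₂ ≤ w₃ + w₁) (hv₃ : v₃ ≤ w₁ + w₂)
    (hw₁ : w₁ ≤ v₂ + v₃) (hw₂ : w₂ ≤ v₃ + v₁) (hw₃ : w₃ ≤ v₁ + v₂) :
    IsOrder p (Lam p 0 v₁ v₂ v₃ w₁ w₂ w₃ 0) := by
  constructor
  · simp [Lam, zone]
  · rintro x ⟨hx₁, hx₂, hx₃, hx₄, hx₅, hx₆, hx₇, hx₈⟩ y ⟨hy₁, hy₂, hy₃, hy₄, hy₅, hy₆, hy₇, hy₈⟩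
    refine ⟨?_, ?_, ?_, ?_, ?_, ?_, ?_, ?_⟩ <;>
      simp only [zmul, cross_apply, Pi.add_apply, Pi.sub_apply, Pi.smul_apply,
          smul_eq_mul, dotProduct, Fin.sum_univ_three, Matrix.cons_val_zero,
          Matrix.cons_val_one, Matrix.head_cons, Matrix.cons_val_two, Matrix.tail_cons] <;>
      apply_rules [inLat.add, inLat.sub, inLat.mul] <;> omega

variable (p)

theorem lam_maximal_order :
    IsOrder p (Lam p 0 1 (-1) 0 (-1) 1 0 0) ∧
    ∀ b₁ b₂ b₃ b₄ b₅ b₆ b₇ b₈ : ℤ,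
      IsOrder p (Lam p b₁ b₂ b₃ b₄ b₅ b₆ b₇ b₈) →
      Lam p 0 1 (-1) 0 (-1) 1 0 0 ⊆ Lam p b₁ b₂ b₃ b₄ b₅ b₆ b₇ b₈ →
      Lam p b₁ b₂ b₃ b₄ b₅ b₆ b₇ b₈ = Lam p 0 1 (-1) 0 (-1) 1 0 0 := by
  refine ⟨by apply isOrder_Lam_of_le <;> norm_num, ?_⟩
  intro b₁ b₂ b₃ b₄ b₅ b₆ b₇ b₈ hord hsub
  have upper := le_of_Lam_subset_Lam hsub
  have nonneg := hord.zero_le_of_Lam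
  have lower := hord.le_add_of_Lam
  obtain ⟨rfl, rfl, rfl, rfl, rfl, rfl, rfl, rfl⟩ :
      b₁ = 0 ∧ b₂ = 1 ∧ b₃ = -1 ∧ b₄ = 0 ∧ b₅ = -1 ∧ b₆ = 1 ∧ b₇ = 0 ∧ b₈ = 0 := by
    omega
  rfl
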